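/- arXiv:2403.06597 — 5 statements merged into one kernel-verified Lean document; each statement's English description precedes it below -/
import Mathlib

section
/- For every x ∈ ℝ^{n+1} with x ≠ 0, the dual gauge of the capillary gauge satisfies F°_θ(x) = |x|² / ( √( cos²θ ⟨x, E_{n+1}⟩² + sin²θ |x|² ) − cos θ ⟨x, E_{n+1}⟩ ). -/
open Metric MeasureTheory

noncomputable section

abbrev Euc (n : ℕ) : Type := EuclideanSpace ℝ (Fin (n + 1))

/-- The vertical unit vector `E_{n+1} = (0, …, 0, 1)`. -/
def lastE (n : ℕ) : Euc n := EuclideanSpace.single (Fin.last n) 1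

/-- The capillary gauge `F_θ(ξ) = |ξ| - cos θ ⟨ξ, E_{n+1}⟩`. -/
def capF (n : ℕ) (θ : ℝ) (ξ : Euc n) : ℝ :=
  ‖ξ‖ - Real.cos θ * (inner ℝ ξ (lastE n) : ℝ)

/-- The dual gauge `F°_θ(x) = sup {⟨x, z⟩ / F_θ(z) : z ∈ 𝕊ⁿ}`. -/
def capFdual (n : ℕ) (θ : ℝ) (x : Euc n) : ℝ :=
  ⨆ z : sphere (0 : Euc n) 1, (inner ℝ x (z : Euc n) : ℝ) / capF n θ (z : Euc n)

set_option maxHeartbeats 1000000 in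
theorem stmt_1 (n : ℕ) (hn : 1 ≤ n) (θ : ℝ) (hθ : θ ∈ Set.Ioo 0 Real.pi)
    (x : Euc n) (hx : x ≠ 0) :
    capFdual n θ x =
      ‖x‖ ^ 2 /
        (Real.sqrt (Real.cos θ ^ 2 * (inner ℝ x (lastE n) : ℝ) ^ 2 +
            Real.sin θ ^ 2 * ‖x‖ ^ 2) -
          Real.cos θ * (inner ℝ x (lastE n) : ℝ)) := by
  obtain ⟨hθ0, hθπ⟩ := hθ
  set c := Real.cos θ with hc_def
  set s := Real.sin θ with hs_def
  have hs : 0 < s := Real.sin_pos_of_pos_of_lt_pi hθ0 hθπ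
  have hcs : c ^ 2 + s ^ 2 = 1 := by
    rw [hc_def, hs_def]; exact Real.cos_sq_add_sin_sq θ
  have hc1 : |c| < 1 := by nlinarith [sq_abs c, abs_nonneg c, sq_nonneg s]
  set t : ℝ := (inner ℝ x (lastE n) : ℝ) with ht_def
  set r := ‖x‖ with hr_def
  have hr : 0 < r := norm_pos_iff.mpr hx
  set R := Real.sqrt (c ^ 2 * t ^ 2 + s ^ 2 * r ^ 2) with hR_def
  have hR2 : R ^ 2 = c ^ 2 * t ^ 2 + s ^ 2 * r ^ 2 :=
    Real.sq_sqrt (by positivity)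
  have hsr : 0 < s ^ 2 * r ^ 2 := mul_pos (pow_pos hs 2) (pow_pos hr 2)
  have hRpos : 0 < R := Real.sqrt_pos.mpr (by nlinarith [sq_nonneg (c * t)])
  have hRct : |c * t| < R := by
    nlinarith [sq_abs (c * t), abs_nonneg (c * t)]
  obtain ⟨hRct1, hRct2⟩ := abs_lt.mp hRct
  have hD : 0 < R - c * t := by linarith
  have hM0 : 0 < R + c * t := by linarith
  set M := (R + c * t) / s ^ 2 with hM_def
  have hMpos : 0 < M := div_pos hM0 (by positivity)
  have hMs2 : M * s ^ 2 = R + c * t := by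
    rw [hM_def]; field_simp
  have hMD : M * (R - c * t) = r ^ 2 := by
    have h1 : (R + c * t) * (R - c * t) = s ^ 2 * r ^ 2 := by nlinarith
    have hs2 : (s : ℝ) ^ 2 ≠ 0 := by positivity
    rw [hM_def]; field_simp; nlinarith
  clear_value c s t r R M
  have hE : ‖lastE n‖ = 1 := by
    simp [lastE, EuclideanSpace.norm_single]
  have hEE : (inner ℝ (lastE n) (lastE n) : ℝ) = 1 := by
    rw [real_inner_self_eq_norm_sq, hE]; norm_num
  set v : Euc n := x + (M * c) • lastE n with hv_def
  have hxE : (inner ℝ x ((M * c) • lastE n) : ℝ) = M * c * t := by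
    rw [real_inner_smul_right, ht_def]
  have hv2 : ‖v‖ ^ 2 = r ^ 2 + 2 * (M * c * t) + (M * c) ^ 2 := by
    rw [hv_def, norm_add_sq_real, hxE, norm_smul, hE, mul_one,
      Real.norm_eq_abs, sq_abs, ← hr_def]
  have hvM : ‖v‖ ^ 2 = M ^ 2 := by
    rw [hv2]; nlinarith
  have hvnorm : ‖v‖ = M := by
    have h1 : ‖v‖ = Real.sqrt (M ^ 2) := by
      rw [← hvM, Real.sqrt_sq (norm_nonneg v)]
    rw [h1, Real.sqrt_sq hMpos.le]
  clear_value v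
  -- the maximizing point
  set z0 : Euc n := M⁻¹ • v with hz0_def
  have hz0norm : ‖z0‖ = 1 := by
    rw [hz0_def, norm_smul, hvnorm, Real.norm_eq_abs, abs_inv, abs_of_pos hMpos]
    field_simp
  have hz0mem : z0 ∈ sphere (0 : Euc n) 1 := by
    rw [mem_sphere_zero_iff_norm]; exact hz0norm
  clear_value z0
  -- capF is positive on unit vectors
  have hcap : ∀ z : Euc n, ‖z‖ = 1 → 0 < capF n θ z := by
    intro z hz
    have h1 : |(inner ℝ z (lastE n) : ℝ)| ≤ 1 := by
      have := abs_real_inner_le_norm z (lastE n)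
      rwa [hz, hE, one_mul] at this
    have h2 : c * (inner ℝ z (lastE n) : ℝ) ≤ |c| * |(inner ℝ z (lastE n) : ℝ)| := by
      rw [← abs_mul]; exact le_abs_self _
    unfold capF
    rw [hz, ← hc_def]
    nlinarith [abs_nonneg c]
  -- upper bound
  have hub : ∀ z : sphere (0 : Euc n) 1,
      (inner ℝ x (z : Euc n) : ℝ) / capF n θ (z : Euc n) ≤ M := by
    intro ⟨z, hz⟩
    have hz1 : ‖z‖ = 1 := mem_sphere_zero_iff_norm.mp hz
    have hcz := hcap z hz1
    rw [div_le_iff₀ hcz]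
    have hCS : (inner ℝ v z : ℝ) ≤ M := by
      have := real_inner_le_norm v z
      rwa [hvnorm, hz1, mul_one] at this
    have hexp : (inner ℝ v z : ℝ) =
        (inner ℝ x z : ℝ) + M * c * (inner ℝ z (lastE n) : ℝ) := by
      rw [hv_def, inner_add_left, real_inner_smul_left, real_inner_comm (lastE n) z]
    unfold capF
    rw [hz1, ← hc_def]
    nlinarith [hCS, hexp]
  -- value at z0
  have hxz0 : (inner ℝ x z0 : ℝ) = M⁻¹ * (r ^ 2 + M * c * t) := by
    rw [hz0_def, real_inner_smul_right, hv_def, inner_add_right, hxE,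
      real_inner_self_eq_norm_sq, ← hr_def]
  have hz0E : (inner ℝ z0 (lastE n) : ℝ) = M⁻¹ * (t + M * c) := by
    rw [hz0_def, real_inner_smul_left, hv_def, inner_add_left,
      real_inner_smul_left, hEE, ← ht_def]
    ring
  have hval : (inner ℝ x z0 : ℝ) / capF n θ z0 = M := by
    have hcapz0 : capF n θ z0 = M⁻¹ * R := by
      unfold capF
      rw [hz0norm, hz0E]
      have hM' : (M : ℝ) ≠ 0 := hMpos.ne'
      field_simp
      linear_combination hMs2 - M * hcs + (M * c + t) * hc_def
    rw [hxz0, hcapz0]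
    have hnum : r ^ 2 + M * c * t = M * R := by linear_combination -hMD
    rw [hnum]
    field_simp
  -- conclude
  have hne : Nonempty (sphere (0 : Euc n) 1) := ⟨⟨z0, hz0mem⟩⟩
  have hsup : capFdual n θ x = M := by
    unfold capFdual
    apply le_antisymm
    · exact ciSup_le hub
    · have := le_ciSup (f := fun z : sphere (0 : Euc n) 1 =>
        (inner ℝ x (z : Euc n) : ℝ) / capF n θ (z : Euc n))
        ⟨M, Set.forall_mem_range.mpr hub⟩ ⟨z0, hz0mem⟩
      exact le_trans hval.symm.le this
  rw [hsup, eq_div_iff hD.ne']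
  linarith [hMD]
end
end

section
/- The unit Wulff shape of the capillary gauge is a translated unit sphere: {x ∈ ℝ^{n+1} : F°_θ(x) = 1} = {x ∈ ℝ^{n+1} : |x + cos θ · E_{n+1}| = 1}. -/
open Metric MeasureTheory

noncomputable section

theorem stmt_2 (n : ℕ) (hn : 1 ≤ n) (θ : ℝ) (hθ : θ ∈ Set.Ioo 0 Real.pi) :
    {x : Euc n | capFdual n θ x = 1} =
      {x : Euc n | ‖x + Real.cos θ • lastE n‖ = 1} := by
  have hs : 0 < Real.sin θ := Real.sin_pos_of_pos_of_lt_pi hθ.1 hθ.2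
  set c := Real.cos θ with hcdef
  have hc1 : |c| < 1 := by
    have h := Real.sin_sq_add_cos_sq θ
    have h2 := sq_abs c
    nlinarith [abs_nonneg c]
  have hEnorm : ‖lastE n‖ = 1 := by simp [lastE]
  haveI hne : Nonempty (sphere (0 : Euc n) 1) :=
    ⟨⟨lastE n, by simp [mem_sphere_zero_iff_norm, hEnorm]⟩⟩
  ext x
  simp only [Set.mem_setOf_eq]
  set v := x + c • lastE n with hv
  set r := ‖v‖ with hr
  have hr0 : 0 ≤ r := norm_nonneg _
  have hxz : ∀ z : Euc n, (inner ℝ x z : ℝ)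
      = (inner ℝ v z : ℝ) - c * (inner ℝ z (lastE n) : ℝ) := by
    intro z
    rw [hv, inner_add_left, real_inner_smul_left, real_inner_comm z (lastE n)]
    ring
  -- per-sphere-point facts
  have hfacts : ∀ z : sphere (0 : Euc n) 1,
      (inner ℝ x (z : Euc n) : ℝ) / capF n θ (z : Euc n)
        = ((inner ℝ v (z : Euc n) : ℝ) - c * (inner ℝ (z : Euc n) (lastE n) : ℝ))
            / (1 - c * (inner ℝ (z : Euc n) (lastE n) : ℝ))
      ∧ -|c| ≤ c * (inner ℝ (z : Euc n) (lastE n) : ℝ)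
      ∧ c * (inner ℝ (z : Euc n) (lastE n) : ℝ) ≤ |c|
      ∧ (inner ℝ v (z : Euc n) : ℝ) ≤ r := by
    intro z
    have hz : ‖(z : Euc n)‖ = 1 := mem_sphere_zero_iff_norm.mp z.2
    have ht : |(inner ℝ (z : Euc n) (lastE n) : ℝ)| ≤ 1 := by
      have := abs_real_inner_le_norm (z : Euc n) (lastE n)
      rw [hz, hEnorm] at this; simpa using this
    have hct : |c * (inner ℝ (z : Euc n) (lastE n) : ℝ)| ≤ |c| := by
      rw [abs_mul]; exact mul_le_of_le_one_right (abs_nonneg c) ht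
    have hvz : (inner ℝ v (z : Euc n) : ℝ) ≤ r := by
      have := real_inner_le_norm v (z : Euc n)
      rw [hz] at this; simpa using this
    refine ⟨?_, (abs_le.mp hct).1, (abs_le.mp hct).2, hvz⟩
    rw [hxz, capF, hz]
  have hd0 : (0 : ℝ) < 1 - |c| := by linarith
  -- bounded above
  have hM : BddAbove (Set.range fun z : sphere (0 : Euc n) 1 =>
      (inner ℝ x (z : Euc n) : ℝ) / capF n θ (z : Euc n)) := by
    refine ⟨(r + 1) / (1 - |c|), ?_⟩
    rintro _ ⟨z, rfl⟩
    obtain ⟨h1, h2, h3, h4⟩ := hfacts z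
    show (inner ℝ x (z : Euc n) : ℝ) / capF n θ (z : Euc n) ≤ (r + 1) / (1 - |c|)
    rw [h1]
    set s := c * (inner ℝ (z : Euc n) (lastE n) : ℝ)
    have hds : 0 < 1 - s := by linarith
    rw [div_le_div_iff₀ hds hd0]
    nlinarith [abs_nonneg c]
  -- the three cases
  have claim_lt : r < 1 → capFdual n θ x < 1 := by
    intro hrl
    have hub : capFdual n θ x ≤ (r + |c|) / (1 + |c|) := by
      apply ciSup_le
      intro z
      obtain ⟨h1, h2, h3, h4⟩ := hfacts z
      rw [h1]
      set s := c * (inner ℝ (z : Euc n) (lastE n) : ℝ)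
      have hds : 0 < 1 - s := by linarith
      have hdc : (0 : ℝ) < 1 + |c| := by linarith [abs_nonneg c]
      rw [div_le_div_iff₀ hds hdc]
      nlinarith [mul_nonneg (sub_nonneg.mpr hrl.le) (by linarith : (0:ℝ) ≤ |c| + s)]
    have : (r + |c|) / (1 + |c|) < 1 := by
      rw [div_lt_one (by linarith [abs_nonneg c])]; linarith
    linarith
  have claim_eq : r = 1 → capFdual n θ x = 1 := by
    intro hre
    have hvpos : v ≠ 0 := by
      rw [← norm_ne_zero_iff, ← hr, hre]; norm_num
    set z₀ : Euc n := (r⁻¹ : ℝ) • v with hz₀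
    have hz₀n : ‖z₀‖ = 1 := by
      rw [hz₀, norm_smul, norm_inv, Real.norm_eq_abs, abs_of_nonneg hr0, ← hr, hre]
      norm_num
    have hz₀s : z₀ ∈ sphere (0 : Euc n) 1 := mem_sphere_zero_iff_norm.mpr hz₀n
    have hvz₀ : (inner ℝ v z₀ : ℝ) = r := by
      rw [hz₀, real_inner_smul_right, real_inner_self_eq_norm_sq, ← hr, hre]
      norm_num
    refine le_antisymm ?_ ?_
    · apply ciSup_le
      intro z
      obtain ⟨h1, h2, h3, h4⟩ := hfacts z
      rw [h1]
      set s := c * (inner ℝ (z : Euc n) (lastE n) : ℝ)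
      have hds : 0 < 1 - s := by linarith
      rw [div_le_one hds]; linarith
    · refine le_ciSup_of_le hM ⟨z₀, hz₀s⟩ ?_
      obtain ⟨h1, h2, h3, h4⟩ := hfacts ⟨z₀, hz₀s⟩
      rw [h1]
      simp only
      rw [hvz₀, hre]
      set s := c * (inner ℝ (z₀ : Euc n) (lastE n) : ℝ)
      have hds : 0 < 1 - s := by linarith
      rw [div_self hds.ne']
  have claim_gt : 1 < r → 1 < capFdual n θ x := by
    intro hrg
    have hrpos : 0 < r := by linarith
    set z₀ : Euc n := (r⁻¹ : ℝ) • v with hz₀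
    have hz₀n : ‖z₀‖ = 1 := by
      rw [hz₀, norm_smul, norm_inv, Real.norm_eq_abs, abs_of_nonneg hr0, ← hr]
      field_simp
    have hz₀s : z₀ ∈ sphere (0 : Euc n) 1 := mem_sphere_zero_iff_norm.mpr hz₀n
    have hvz₀ : (inner ℝ v z₀ : ℝ) = r := by
      rw [hz₀, real_inner_smul_right, real_inner_self_eq_norm_sq, ← hr]
      field_simp
    have key : 1 < (inner ℝ x (z₀ : Euc n) : ℝ) / capF n θ z₀ := by
      obtain ⟨h1, h2, h3, h4⟩ := hfacts ⟨z₀, hz₀s⟩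
      simp only at h1 h2 h3 h4
      rw [h1, hvz₀]
      set s := c * (inner ℝ (z₀ : Euc n) (lastE n) : ℝ)
      have hds : 0 < 1 - s := by linarith
      rw [lt_div_iff₀ hds]; linarith
    calc (1 : ℝ) < (inner ℝ x (z₀ : Euc n) : ℝ) / capF n θ z₀ := key
      _ ≤ capFdual n θ x := le_ciSup_of_le hM ⟨z₀, hz₀s⟩ le_rfl
  constructor
  · intro h
    rcases lt_trichotomy r 1 with h1 | h1 | h1
    · exact absurd h (claim_lt h1).ne
    · exact h1
    · exact absurd h.symm (claim_gt h1).ne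
  · exact claim_eq
end
end

section
/- For every o ∈ ℝ^{n+1} and every r > 0, the closed Wulff ball of the capillary gauge is a shifted Euclidean ball: {x ∈ ℝ^{n+1} : F°_θ(x − o) ≤ r} equals the closed Euclidean ball of radius r centered at o − r cos θ · E_{n+1}. -/
open Metric MeasureTheory

noncomputable section

lemma norm_lastE (n : ℕ) : ‖lastE n‖ = 1 := by
  simp [lastE, EuclideanSpace.norm_single]

lemma abs_cos_lt_one {θ : ℝ} (hθ : θ ∈ Set.Ioo 0 Real.pi) : |Real.cos θ| < 1 := by
  rw [abs_lt]
  constructor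
  · have := Real.cos_lt_cos_of_nonneg_of_le_pi (le_of_lt hθ.1) le_rfl hθ.2
    simpa [Real.cos_pi] using this
  · have := Real.cos_lt_cos_of_nonneg_of_le_pi le_rfl (le_of_lt hθ.2) hθ.1
    simpa using this

lemma capF_lb {n : ℕ} {θ : ℝ} (hθ : θ ∈ Set.Ioo 0 Real.pi)
    (z : Euc n) (hz : ‖z‖ = 1) : 1 - |Real.cos θ| ≤ capF n θ z := by
  have h1 : |(inner ℝ z (lastE n) : ℝ)| ≤ 1 := by
    have := abs_real_inner_le_norm z (lastE n)
    simpa [hz, norm_lastE] using this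
  have : Real.cos θ * (inner ℝ z (lastE n) : ℝ) ≤ |Real.cos θ| := by
    calc Real.cos θ * (inner ℝ z (lastE n) : ℝ)
        ≤ |Real.cos θ * (inner ℝ z (lastE n) : ℝ)| := le_abs_self _
      _ = |Real.cos θ| * |(inner ℝ z (lastE n) : ℝ)| := abs_mul _ _
      _ ≤ |Real.cos θ| * 1 := by
          exact mul_le_mul_of_nonneg_left h1 (abs_nonneg _)
      _ = |Real.cos θ| := mul_one _
  simp only [capF, hz]
  linarith

lemma capF_pos {n : ℕ} {θ : ℝ} (hθ : θ ∈ Set.Ioo 0 Real.pi)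
    (z : Euc n) (hz : ‖z‖ = 1) : 0 < capF n θ z :=
  lt_of_lt_of_le (by linarith [abs_cos_lt_one hθ]) (capF_lb hθ z hz)

theorem stmt_3 (n : ℕ) (hn : 1 ≤ n) (θ : ℝ) (hθ : θ ∈ Set.Ioo 0 Real.pi)
    (o : Euc n) (r : ℝ) (hr : 0 < r) :
    {x : Euc n | capFdual n θ (x - o) ≤ r} =
      closedBall (o - (r * Real.cos θ) • lastE n) r := by
  haveI : Nonempty (sphere (0 : Euc n) 1) :=
    (NormedSpace.sphere_nonempty.mpr (by norm_num)).to_subtype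
  have hcos := abs_cos_lt_one hθ
  ext x
  set y : Euc n := (x - o) + (r * Real.cos θ) • lastE n with hy
  have hterm : ∀ z : sphere (0 : Euc n) 1,
      ((inner ℝ (x - o) (z : Euc n) : ℝ) / capF n θ (z : Euc n) ≤ r ↔
        (inner ℝ y (z : Euc n) : ℝ) ≤ r) := by
    intro z
    have hz : ‖(z : Euc n)‖ = 1 := by
      have := z.2
      simpa [mem_sphere_iff_norm] using this
    have hpos := capF_pos hθ (z : Euc n) hz
    rw [div_le_iff₀ hpos]
    have hyz : (inner ℝ y (z : Euc n) : ℝ) =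
        (inner ℝ (x - o) (z : Euc n) : ℝ) +
          (r * Real.cos θ) * (inner ℝ (z : Euc n) (lastE n) : ℝ) := by
      rw [hy, inner_add_left, real_inner_smul_left, real_inner_comm (lastE n)]
    have hcap : capF n θ (z : Euc n) =
        1 - Real.cos θ * (inner ℝ (z : Euc n) (lastE n) : ℝ) := by
      simp [capF, hz]
    rw [hcap, hyz]; constructor <;> intro h <;> nlinarith
  have hbdd : BddAbove (Set.range fun z : sphere (0 : Euc n) 1 =>
      (inner ℝ (x - o) (z : Euc n) : ℝ) / capF n θ (z : Euc n)) := by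
    refine ⟨‖x - o‖ / (1 - |Real.cos θ|), ?_⟩
    rintro _ ⟨z, rfl⟩
    have hz : ‖(z : Euc n)‖ = 1 := by
      have := z.2
      simpa [mem_sphere_iff_norm] using this
    have hpos := capF_pos hθ (z : Euc n) hz
    have hlb := capF_lb hθ (z : Euc n) hz
    have hden : (0:ℝ) < 1 - |Real.cos θ| := by linarith
    rcases le_or_gt (inner ℝ (x - o) (z : Euc n) : ℝ) 0 with h | h
    · exact le_trans (div_nonpos_iff.mpr (Or.inr ⟨h, hpos.le⟩)) (by positivity)
    · refine div_le_div₀ (norm_nonneg _) ?_ hden hlb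
      calc (inner ℝ (x - o) (z : Euc n) : ℝ) ≤ ‖x - o‖ * ‖(z : Euc n)‖ :=
            real_inner_le_norm _ _
        _ = ‖x - o‖ := by rw [hz, mul_one]
  have key : capFdual n θ (x - o) ≤ r ↔
      ∀ z : sphere (0 : Euc n) 1, (inner ℝ y (z : Euc n) : ℝ) ≤ r := by
    constructor
    · intro h z
      rw [← hterm z]
      exact le_trans (le_ciSup hbdd z) h
    · intro h
      exact ciSup_le fun z => (hterm z).mpr (h z)
  have hball : x ∈ closedBall (o - (r * Real.cos θ) • lastE n) r ↔ ‖y‖ ≤ r := by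
    rw [mem_closedBall, dist_eq_norm]
    congr! 2
    rw [hy]
    abel
  have norm_iff : (∀ z : sphere (0 : Euc n) 1, (inner ℝ y (z : Euc n) : ℝ) ≤ r) ↔
      ‖y‖ ≤ r := by
    constructor
    · intro h
      rcases eq_or_ne y 0 with h0 | h0
      · simp [h0, hr.le]
      · have hny : (0:ℝ) < ‖y‖ := norm_pos_iff.mpr h0
        set z : Euc n := ‖y‖⁻¹ • y with hzdef
        have hz : ‖z‖ = 1 := by
          rw [hzdef, norm_smul, norm_inv, norm_norm, inv_mul_cancel₀ hny.ne']
        have := h ⟨z, by simpa [mem_sphere_iff_norm] using hz⟩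
        have hin : (inner ℝ y z : ℝ) = ‖y‖ := by
          rw [hzdef, real_inner_smul_right, real_inner_self_eq_norm_sq]
          field_simp
        rwa [hin] at this
    · intro h z
      have hz : ‖(z : Euc n)‖ = 1 := by
        have := z.2
        simpa [mem_sphere_iff_norm] using this
      calc (inner ℝ y (z : Euc n) : ℝ) ≤ ‖y‖ * ‖(z : Euc n)‖ := real_inner_le_norm _ _
        _ = ‖y‖ := by rw [hz, mul_one]
        _ ≤ r := h
  simp only [Set.mem_setOf_eq]
  rw [key, hball, norm_iff]
end
end

section
/- Let S ⊂ ℝ^{n+1} be a nonempty compact set. For every y ∈ ℝ^{n+1}, the shifted distance satisfies u_θ(y) = dist(y − u_θ(y) cos θ · E_{n+1}, S), where dist denotes the Euclidean distance from a point to the set S. -/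
open Metric MeasureTheory

noncomputable section

/-- The shifted distance to a set `S`: `u_θ(y) = inf_{z ∈ S} F°_θ(z - y)`. -/
def shiftedDist (n : ℕ) (θ : ℝ) (S : Set (Euc n)) (y : Euc n) : ℝ :=
  sInf ((fun z => capFdual n θ (z - y)) '' S)

lemma capFdual_spec (n : ℕ) (θ : ℝ) (hθ : θ ∈ Set.Ioo 0 Real.pi) (x : Euc n) :
    0 ≤ capFdual n θ x ∧
      ‖x + (capFdual n θ x * Real.cos θ) • lastE n‖ = capFdual n θ x := by
  set c : ℝ := Real.cos θ with hcdef
  set v : Euc n := lastE n with hvdef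
  have hv : ‖v‖ = 1 := norm_lastE n
  have hc1 : c < 1 := by
    have := Real.cos_lt_cos_of_nonneg_of_le_pi le_rfl hθ.2.le hθ.1
    simpa using this
  have hc2 : -1 < c := by
    have := Real.cos_lt_cos_of_nonneg_of_le_pi hθ.1.le le_rfl hθ.2
    simpa using this
  have hcabs : |c| < 1 := abs_lt.mpr ⟨hc2, hc1⟩
  -- positivity of capF on the unit sphere
  have hFpos : ∀ z : Euc n, ‖z‖ = 1 → 0 < capF n θ z := by
    intro z hz
    have h1 : |(inner ℝ z v : ℝ)| ≤ 1 := by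
      have := abs_real_inner_le_norm z v
      rw [hz, hv] at this; simpa using this
    have : |c * (inner ℝ z v : ℝ)| < 1 := by
      rcases eq_or_ne (inner ℝ z v : ℝ) 0 with h | h
      · simp [h]
      · have h2 : |c| * |(inner ℝ z v : ℝ)| ≤ |c| := by nlinarith [abs_nonneg c]
        calc |c * (inner ℝ z v : ℝ)| = |c| * |(inner ℝ z v : ℝ)| := abs_mul _ _
          _ ≤ |c| := h2
          _ < 1 := hcabs
    have := (abs_lt.mp this).2
    simp only [capF, ← hvdef, ← hcdef, hz]
    linarith
  have hFeq : ∀ z : Euc n, ‖z‖ = 1 → capF n θ z = 1 - c * (inner ℝ z v : ℝ) := by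
    intro z hz; simp [capF, hz, ← hvdef, ← hcdef]
  -- find the root t₀
  set T : ℝ := ‖x‖ / (1 - |c|) with hTdef
  have h1c : 0 < 1 - |c| := by linarith
  have hT0 : 0 ≤ T := div_nonneg (norm_nonneg x) h1c.le
  have hcont : Continuous fun t : ℝ => ‖x + (t * c) • v‖ - t := by
    apply Continuous.sub _ continuous_id
    exact (continuous_norm.comp (continuous_const.add
      (((continuous_id.mul continuous_const).smul continuous_const))))
  have hgT : ‖x + (T * c) • v‖ - T ≤ 0 := by
    have h1 : ‖x + (T * c) • v‖ ≤ ‖x‖ + ‖(T * c) • v‖ := norm_add_le _ _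
    have h2 : ‖(T * c) • v‖ = |T * c| := by rw [norm_smul, hv, mul_one, Real.norm_eq_abs]
    have h3 : |T * c| = T * |c| := by rw [abs_mul, abs_of_nonneg hT0]
    have h4 : ‖x‖ = T * (1 - |c|) := by
      rw [hTdef]; field_simp
    nlinarith [norm_nonneg (x + (T * c) • v)]
  have hg0 : 0 ≤ ‖x + (0 * c) • v‖ - 0 := by simp
  obtain ⟨t₀, ht₀mem, ht₀⟩ : ∃ t ∈ Set.Icc (0 : ℝ) T,
      (fun t : ℝ => ‖x + (t * c) • v‖ - t) t = 0 := by
    have := intermediate_value_Icc' hT0 hcont.continuousOn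
      (a := (0 : ℝ)) (b := T)
    have hmem : (0 : ℝ) ∈ Set.Icc (‖x + (T * c) • v‖ - T) (‖x + (0 * c) • v‖ - 0) :=
      ⟨hgT, hg0⟩
    obtain ⟨t, ht, ht'⟩ := this hmem
    exact ⟨t, ht, ht'⟩
  have ht₀0 : 0 ≤ t₀ := ht₀mem.1
  set w : Euc n := x + (t₀ * c) • v with hwdef
  have hwnorm : ‖w‖ = t₀ := by
    have := ht₀; simp only at this; linarith [sub_eq_zero.mp this]
  -- each term of the sup is ≤ t₀
  have hub : ∀ z : sphere (0 : Euc n) 1,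
      (inner ℝ x (z : Euc n) : ℝ) / capF n θ (z : Euc n) ≤ t₀ := by
    intro z
    have hz : ‖(z : Euc n)‖ = 1 := by
      have := z.2; rwa [mem_sphere_zero_iff_norm] at this
    have hpos := hFpos _ hz
    rw [div_le_iff₀ hpos]
    have hx : x = w - (t₀ * c) • v := by rw [hwdef]; abel
    have h1 : (inner ℝ x (z : Euc n) : ℝ)
        = (inner ℝ w (z : Euc n) : ℝ) - (t₀ * c) * (inner ℝ v (z : Euc n) : ℝ) := by
      rw [hx, inner_sub_left, real_inner_smul_left]
    have h2 : (inner ℝ w (z : Euc n) : ℝ) ≤ t₀ := by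
      have := real_inner_le_norm w (z : Euc n)
      rwa [hwnorm, hz, mul_one] at this
    rw [hFeq _ hz, real_inner_comm v ((z : Euc n))] at *
    nlinarith
  have hsphne : Nonempty (sphere (0 : Euc n) 1) :=
    ⟨⟨v, by rwa [mem_sphere_zero_iff_norm]⟩⟩
  have hbdd : BddAbove (Set.range fun z : sphere (0 : Euc n) 1 =>
      (inner ℝ x (z : Euc n) : ℝ) / capF n θ (z : Euc n)) := by
    refine ⟨t₀, ?_⟩
    rintro r ⟨z, rfl⟩
    exact hub z
  have hmain : capFdual n θ x = t₀ := by
    apply le_antisymm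
    · exact ciSup_le hub
    · by_cases h0 : w = 0
      · have ht₀z : t₀ = 0 := by rw [← hwnorm, h0, norm_zero]
        have hx0 : x = 0 := by
          have : x = w - (t₀ * c) • v := by rw [hwdef]; abel
          rw [this, h0, ht₀z]; simp
        have hz : v ∈ sphere (0 : Euc n) 1 := by rwa [mem_sphere_zero_iff_norm]
        have := le_ciSup hbdd (⟨v, hz⟩ : sphere (0 : Euc n) 1)
        rw [hx0] at this ⊢
        simpa [ht₀z, capFdual] using this
      · have ht₀pos : 0 < t₀ := by
          rw [← hwnorm]; exact norm_pos_iff.mpr h0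
        set z : Euc n := t₀⁻¹ • w with hzdef
        have hz : ‖z‖ = 1 := by
          rw [hzdef, norm_smul, hwnorm, Real.norm_eq_abs,
            abs_of_pos (inv_pos.mpr ht₀pos)]
          field_simp
        have hzm : z ∈ sphere (0 : Euc n) 1 := by rwa [mem_sphere_zero_iff_norm]
        have hx : x = w - (t₀ * c) • v := by rw [hwdef]; abel
        have hinnxz : (inner ℝ x z : ℝ) = t₀ - c * (inner ℝ v w : ℝ) := by
          rw [hx, inner_sub_left, hzdef, real_inner_smul_right, real_inner_smul_right,
            real_inner_self_eq_norm_sq, hwnorm, real_inner_smul_left]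
          field_simp
        have hFz : capF n θ z = 1 - c * t₀⁻¹ * (inner ℝ v w : ℝ) := by
          rw [hFeq _ hz, hzdef, real_inner_smul_left, real_inner_comm]
          ring
        have hFzpos := hFpos _ hz
        have hterm : (inner ℝ x z : ℝ) / capF n θ z = t₀ := by
          rw [hinnxz, hFz]
          rw [div_eq_iff (by rw [← hFz]; exact hFzpos.ne')]
          field_simp
        have := le_ciSup hbdd (⟨z, hzm⟩ : sphere (0 : Euc n) 1)
        rw [hterm] at this
        exact this
  refine ⟨?_, ?_⟩
  · rw [hmain]; exact ht₀0
  · rw [hmain]; exact hwnorm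

theorem stmt_10 (n : ℕ) (hn : 1 ≤ n) (θ : ℝ) (hθ : θ ∈ Set.Ioo 0 Real.pi)
    (S : Set (Euc n)) (hS : S.Nonempty) (hSc : IsCompact S)
    (y : Euc n) :
    shiftedDist n θ S y =
      Metric.infDist (y - (shiftedDist n θ S y * Real.cos θ) • lastE n) S := by
  set c : ℝ := Real.cos θ with hcdef
  set v : Euc n := lastE n with hvdef
  have hv : ‖v‖ = 1 := norm_lastE n
  have hc1 : c < 1 := by
    have := Real.cos_lt_cos_of_nonneg_of_le_pi le_rfl hθ.2.le hθ.1
    simpa using this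
  have hc2 : -1 < c := by
    have := Real.cos_lt_cos_of_nonneg_of_le_pi hθ.1.le le_rfl hθ.2
    simpa using this
  have hcabs : |c| ≤ 1 := (abs_lt.mpr ⟨hc2, hc1⟩).le
  set t : Euc n → ℝ := fun z => capFdual n θ (z - y) with htdef
  have hspec : ∀ z : Euc n, 0 ≤ t z ∧ ‖(z - y) + (t z * c) • v‖ = t z := by
    intro z
    exact capFdual_spec n θ hθ (z - y)
  set u : ℝ := shiftedDist n θ S y with hudef
  have himne : (t '' S).Nonempty := hS.image t
  have hbdd : BddBelow (t '' S) := by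
    refine ⟨0, ?_⟩
    rintro r ⟨z, _, rfl⟩
    exact (hspec z).1
  have hu0 : 0 ≤ u := le_csInf himne (by rintro r ⟨z, _, rfl⟩; exact (hspec z).1)
  have hule : ∀ z ∈ S, u ≤ t z := fun z hz => csInf_le hbdd ⟨z, hz, rfl⟩
  set p : Euc n := y - (u * c) • v with hpdef
  have hdist : ∀ z : Euc n, dist p z = ‖(z - y) + (u * c) • v‖ := by
    intro z
    rw [dist_eq_norm, hpdef, ← norm_neg]
    congr 1
    abel
  have hkey : ∀ z : Euc n, |‖(z - y) + (u * c) • v‖ - t z| ≤ |t z - u| := by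
    intro z
    have h2 := (hspec z).2
    calc |‖(z - y) + (u * c) • v‖ - t z|
        = |‖(z - y) + (u * c) • v‖ - ‖(z - y) + (t z * c) • v‖| := by rw [h2]
      _ ≤ ‖((z - y) + (u * c) • v) - ((z - y) + (t z * c) • v)‖ :=
          abs_norm_sub_norm_le _ _
      _ = ‖((u - t z) * c) • v‖ := by congr 1; module
      _ = |(u - t z) * c| := by rw [norm_smul, hv, mul_one, Real.norm_eq_abs]
      _ = |u - t z| * |c| := abs_mul _ _
      _ ≤ |t z - u| * 1 := by
          rw [abs_sub_comm]
          exact mul_le_mul_of_nonneg_left hcabs (abs_nonneg _)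
      _ = |t z - u| := mul_one _
  apply le_antisymm
  · -- u ≤ infDist
    rw [← not_lt]
    intro hcon
    rw [infDist_lt_iff hS] at hcon
    obtain ⟨z, hz, hcon⟩ := hcon
    rw [hdist z] at hcon
    have hk := hkey z
    have h1 : |t z - u| = t z - u := abs_of_nonneg (by linarith [hule z hz])
    rw [h1] at hk
    have := (abs_le.mp hk).1
    linarith
  · -- infDist ≤ u
    apply le_of_forall_pos_le_add
    intro ε hε
    have hlt : u < u + ε / 2 := by linarith
    obtain ⟨r, ⟨z, hzS, rfl⟩, hr⟩ := exists_lt_of_csInf_lt himne hlt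
    have hk := hkey z
    have h1 : |t z - u| = t z - u := abs_of_nonneg (by linarith [hule z hzS])
    rw [h1] at hk
    have h2 := (abs_le.mp hk).2
    calc infDist p S ≤ dist p z := infDist_le_dist_of_mem hzS
      _ = ‖(z - y) + (u * c) • v‖ := hdist z
      _ ≤ t z + (t z - u) := by linarith
      _ ≤ u + ε := by linarith [hule z hzS]
end
end

section
/- Let o ∈ ℝ^{n+1} with ⟨o, E_{n+1}⟩ ≥ 0 and let 0 < ρ₁ ≤ ρ₂. Then the rescaled half-space volumes of the θ-balls B_{ρ;θ}(o) are non-increasing in the radius: |B_{ρ₂;θ}(o) ∩ ℝ^{n+1}_+| / ρ₂^{n+1} ≤ |B_{ρ₁;θ}(o) ∩ ℝ^{n+1}_+| / ρ₁^{n+1}; moreover, if ⟨o, E_{n+1}⟩ = 0 then equality holds. -/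
open Metric MeasureTheory Set

noncomputable section

lemma aux_diff (n : ℕ) (w c₁ c₂ : Euc n) (t : ℝ) (h : t • c₂ = c₁ - w) (x : Euc n) :
    w + t • x - c₁ = t • (x - c₂) := by
  rw [smul_sub, h]; abel

lemma aux_measure (n : ℕ) (t : ℝ) (ht : t ≠ 0) (w : Euc n) (S : Set (Euc n)) :
    volume ((fun x : Euc n => w + t • x) ⁻¹' S) =
      ENNReal.ofReal (|((t : ℝ) ^ (n + 1))⁻¹|) * volume S := by
  have hpre : (fun x : Euc n => w + t • x) ⁻¹' S = (t • ·) ⁻¹' ((w + ·) ⁻¹' S) := rfl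
  rw [hpre, Measure.addHaar_preimage_smul volume ht, measure_preimage_add]
  rw [finrank_euclideanSpace, Fintype.card_fin]

lemma aux_sub (n : ℕ) (t : ℝ) (ht0 : 0 < t) (w c₁ c₂ : Euc n) (ρ₁ ρ₂ : ℝ)
    (htρ : t * ρ₂ = ρ₁) (hident : t • c₂ = c₁ - w)
    (hwE : 0 ≤ (inner ℝ w (lastE n) : ℝ)) :
    closedBall c₂ ρ₂ ∩ {x : Euc n | 0 < (inner ℝ x (lastE n) : ℝ)} ⊆
      (fun x : Euc n => w + t • x) ⁻¹'
        (closedBall c₁ ρ₁ ∩ {x : Euc n | 0 < (inner ℝ x (lastE n) : ℝ)}) := by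
  rintro x ⟨hx, hxH⟩
  constructor
  · rw [mem_closedBall_iff_norm, aux_diff n w c₁ c₂ t hident x, norm_smul,
      Real.norm_of_nonneg ht0.le, ← htρ]
    exact mul_le_mul_of_nonneg_left (mem_closedBall_iff_norm.1 hx) ht0.le
  · have hxE : 0 < (inner ℝ x (lastE n) : ℝ) := hxH
    show 0 < (inner ℝ (w + t • x) (lastE n) : ℝ)
    rw [inner_add_left, real_inner_smul_left]
    nlinarith

lemma aux_eq (n : ℕ) (t : ℝ) (ht0 : 0 < t) (w c₁ c₂ : Euc n) (ρ₁ ρ₂ : ℝ)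
    (htρ : t * ρ₂ = ρ₁) (hident : t • c₂ = c₁ - w)
    (hwE : (inner ℝ w (lastE n) : ℝ) = 0) :
    closedBall c₂ ρ₂ ∩ {x : Euc n | 0 < (inner ℝ x (lastE n) : ℝ)} =
      (fun x : Euc n => w + t • x) ⁻¹'
        (closedBall c₁ ρ₁ ∩ {x : Euc n | 0 < (inner ℝ x (lastE n) : ℝ)}) := by
  refine Subset.antisymm (aux_sub n t ht0 w c₁ c₂ ρ₁ ρ₂ htρ hident hwE.ge) ?_
  rintro x ⟨hx, hxH⟩
  have hx' : ‖w + t • x - c₁‖ ≤ ρ₁ := mem_closedBall_iff_norm.1 hx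
  rw [aux_diff n w c₁ c₂ t hident x, norm_smul, Real.norm_of_nonneg ht0.le, ← htρ] at hx'
  constructor
  · rw [mem_closedBall_iff_norm]
    exact le_of_mul_le_mul_left hx' ht0
  · have hxE : 0 < (inner ℝ (w + t • x) (lastE n) : ℝ) := hxH
    rw [inner_add_left, hwE, zero_add, real_inner_smul_left] at hxE
    show 0 < (inner ℝ x (lastE n) : ℝ)
    nlinarith

lemma aux_ident (n : ℕ) (o : Euc n) (θ ρ₁ ρ₂ : ℝ) (h1 : 0 < ρ₁) (h2 : 0 < ρ₂) :
    (ρ₁ / ρ₂) • (o - (ρ₂ * Real.cos θ) • lastE n) =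
      (o - (ρ₁ * Real.cos θ) • lastE n) - (1 - ρ₁ / ρ₂) • o := by
  match_scalars
  · ring
  · field_simp

lemma aux_ofReal (n : ℕ) (ρ₁ ρ₂ : ℝ) (h1 : 0 < ρ₁) (h2 : 0 < ρ₂) :
    ENNReal.ofReal (|(((ρ₁ / ρ₂) : ℝ) ^ (n + 1))⁻¹|) =
      ENNReal.ofReal ((ρ₂ / ρ₁) ^ (n + 1)) := by
  congr 1
  rw [abs_of_nonneg (by positivity), div_pow, inv_div, div_pow]

lemma key_le (n : ℕ) (o : Euc n) (ho : 0 ≤ (inner ℝ o (lastE n) : ℝ)) (θ : ℝ)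
    (ρ₁ ρ₂ : ℝ) (h1 : 0 < ρ₁) (h12 : ρ₁ ≤ ρ₂) :
    volume (closedBall (o - (ρ₂ * Real.cos θ) • lastE n) ρ₂ ∩
        {x : Euc n | 0 < (inner ℝ x (lastE n) : ℝ)}) ≤
      ENNReal.ofReal ((ρ₂ / ρ₁) ^ (n + 1)) *
        volume (closedBall (o - (ρ₁ * Real.cos θ) • lastE n) ρ₁ ∩
          {x : Euc n | 0 < (inner ℝ x (lastE n) : ℝ)}) := by
  have h2 : 0 < ρ₂ := h1.trans_le h12
  have ht0 : 0 < ρ₁ / ρ₂ := div_pos h1 h2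
  have hwE : 0 ≤ (inner ℝ ((1 - ρ₁ / ρ₂) • o) (lastE n) : ℝ) := by
    rw [real_inner_smul_left]
    have : ρ₁ / ρ₂ ≤ 1 := by rw [div_le_one h2]; exact h12
    exact mul_nonneg (by linarith) ho
  calc volume (closedBall (o - (ρ₂ * Real.cos θ) • lastE n) ρ₂ ∩
        {x : Euc n | 0 < (inner ℝ x (lastE n) : ℝ)})
      ≤ volume ((fun x : Euc n => (1 - ρ₁ / ρ₂) • o + (ρ₁ / ρ₂) • x) ⁻¹'
          (closedBall (o - (ρ₁ * Real.cos θ) • lastE n) ρ₁ ∩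
            {x : Euc n | 0 < (inner ℝ x (lastE n) : ℝ)})) :=
        measure_mono (aux_sub n _ ht0 _ _ _ ρ₁ ρ₂ (div_mul_cancel₀ _ h2.ne')
          (aux_ident n o θ ρ₁ ρ₂ h1 h2) hwE)
    _ = ENNReal.ofReal ((ρ₂ / ρ₁) ^ (n + 1)) *
          volume (closedBall (o - (ρ₁ * Real.cos θ) • lastE n) ρ₁ ∩
            {x : Euc n | 0 < (inner ℝ x (lastE n) : ℝ)}) := by
        rw [aux_measure n _ ht0.ne' _ _, aux_ofReal n ρ₁ ρ₂ h1 h2]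

lemma key_eq (n : ℕ) (o : Euc n) (ho : (inner ℝ o (lastE n) : ℝ) = 0) (θ : ℝ)
    (ρ₁ ρ₂ : ℝ) (h1 : 0 < ρ₁) (h12 : ρ₁ ≤ ρ₂) :
    volume (closedBall (o - (ρ₂ * Real.cos θ) • lastE n) ρ₂ ∩
        {x : Euc n | 0 < (inner ℝ x (lastE n) : ℝ)}) =
      ENNReal.ofReal ((ρ₂ / ρ₁) ^ (n + 1)) *
        volume (closedBall (o - (ρ₁ * Real.cos θ) • lastE n) ρ₁ ∩
          {x : Euc n | 0 < (inner ℝ x (lastE n) : ℝ)}) := by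
  have h2 : 0 < ρ₂ := h1.trans_le h12
  have ht0 : 0 < ρ₁ / ρ₂ := div_pos h1 h2
  have hwE : (inner ℝ ((1 - ρ₁ / ρ₂) • o) (lastE n) : ℝ) = 0 := by
    rw [real_inner_smul_left, ho, mul_zero]
  rw [aux_eq n _ ht0 _ _ _ ρ₁ ρ₂ (div_mul_cancel₀ _ h2.ne')
      (aux_ident n o θ ρ₁ ρ₂ h1 h2) hwE,
    aux_measure n _ ht0.ne' _ _, aux_ofReal n ρ₁ ρ₂ h1 h2]

theorem stmt_16 (n : ℕ) (hn : 1 ≤ n) (θ : ℝ) (hθ : θ ∈ Set.Ioo 0 Real.pi)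
    (o : Euc n) (ho : 0 ≤ (inner ℝ o (lastE n) : ℝ))
    (ρ₁ ρ₂ : ℝ) (h1 : 0 < ρ₁) (h12 : ρ₁ ≤ ρ₂) :
    (volume (closedBall (o - (ρ₂ * Real.cos θ) • lastE n) ρ₂ ∩
        {x : Euc n | 0 < (inner ℝ x (lastE n) : ℝ)})).toReal / ρ₂ ^ (n + 1) ≤
      (volume (closedBall (o - (ρ₁ * Real.cos θ) • lastE n) ρ₁ ∩
        {x : Euc n | 0 < (inner ℝ x (lastE n) : ℝ)})).toReal / ρ₁ ^ (n + 1) ∧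
    ((inner ℝ o (lastE n) : ℝ) = 0 →
      (volume (closedBall (o - (ρ₂ * Real.cos θ) • lastE n) ρ₂ ∩
          {x : Euc n | 0 < (inner ℝ x (lastE n) : ℝ)})).toReal / ρ₂ ^ (n + 1) =
        (volume (closedBall (o - (ρ₁ * Real.cos θ) • lastE n) ρ₁ ∩
          {x : Euc n | 0 < (inner ℝ x (lastE n) : ℝ)})).toReal / ρ₁ ^ (n + 1)) := by
  have h2 : 0 < ρ₂ := h1.trans_le h12
  set μ₂ := volume (closedBall (o - (ρ₂ * Real.cos θ) • lastE n) ρ₂ ∩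
    {x : Euc n | 0 < (inner ℝ x (lastE n) : ℝ)}) with hμ2
  set μ₁ := volume (closedBall (o - (ρ₁ * Real.cos θ) • lastE n) ρ₁ ∩
    {x : Euc n | 0 < (inner ℝ x (lastE n) : ℝ)}) with hμ1
  have fin1 : μ₁ ≠ ⊤ :=
    ((measure_mono inter_subset_left).trans_lt measure_closedBall_lt_top).ne
  have harith : ∀ a b : ℝ, 0 ≤ b → a ≤ (ρ₂ / ρ₁) ^ (n + 1) * b →
      a / ρ₂ ^ (n + 1) ≤ b / ρ₁ ^ (n + 1) := by
    intro a b hb hab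
    rw [div_le_div_iff₀ (by positivity) (by positivity)]
    calc a * ρ₁ ^ (n + 1) ≤ (ρ₂ / ρ₁) ^ (n + 1) * b * ρ₁ ^ (n + 1) :=
          mul_le_mul_of_nonneg_right hab (by positivity)
      _ = b * ρ₂ ^ (n + 1) := by rw [div_pow, div_mul_eq_mul_div, div_mul_cancel₀ _ (by positivity)]; ring
  have harith' : ∀ a b : ℝ, a = (ρ₂ / ρ₁) ^ (n + 1) * b →
      a / ρ₂ ^ (n + 1) = b / ρ₁ ^ (n + 1) := by
    intro a b hab
    rw [hab, div_eq_div_iff (by positivity) (by positivity)]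
    rw [div_pow, div_mul_eq_mul_div, div_mul_cancel₀ _ (by positivity)]
    ring
  constructor
  · apply harith _ _ ENNReal.toReal_nonneg
    have := ENNReal.toReal_mono (ENNReal.mul_ne_top ENNReal.ofReal_ne_top fin1)
      (key_le n o ho θ ρ₁ ρ₂ h1 h12)
    rwa [ENNReal.toReal_mul, ENNReal.toReal_ofReal (by positivity)] at this
  · intro ho0
    apply harith'
    rw [hμ2, hμ1, key_eq n o ho0 θ ρ₁ ρ₂ h1 h12, ENNReal.toReal_mul,
      ENNReal.toReal_ofReal (by positivity)]
end
end
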